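/- Suppose β ≥ 1 or μ ≥ 1 or β + μ ≥ 1 (so the interior fixed point does not exist), α ∉ (0,1) (so the DP-edge fixed point does not exist), rc/N - c - G + pq(N-1)b < 0, and r < N. Then at the all-defector vertex (0,1,0), both eigenvalues of the Jacobian of the reduced planar replicator system, namely rc/N - c and rc/N - c - G + pq(N-1)b, are strictly negative, so the all-defector state is asymptotically stable, while the eigenvalue G at the all-punisher vertex and the eigenvalue c - rc/N at the all-cooperator vertex are strictly positive, so those vertices are unstable. -/

import Mathlib

/-- Right-hand side of ẋ in the reduced planar replicator system (z = 1-x-y). -/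
noncomputable def fRHS (N r c G B b h p q : ℝ) (x y : ℝ) : ℝ :=
  let z := 1 - x - y
  let PC := r*c/N*(N-1)*(x+z) + r*c/N - c
  let PD := r*c/N*(N-1)*(x+z) - (1-p*q)*B*(N-1)*z - p*q*(N-1)*z*h
  let PP := r*c/N*(N-1)*(x+z) + r*c/N - c - G + p*q*(N-1)*y*b
  x*((1-x)*(PC-PP) - y*(PD-PP))

/-- Right-hand side of ẏ in the reduced planar replicator system (z = 1-x-y). -/
noncomputable def gRHS (N r c G B b h p q : ℝ) (x y : ℝ) : ℝ :=
  let z := 1 - x - y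
  let PC := r*c/N*(N-1)*(x+z) + r*c/N - c
  let PD := r*c/N*(N-1)*(x+z) - (1-p*q)*B*(N-1)*z - p*q*(N-1)*z*h
  let PP := r*c/N*(N-1)*(x+z) + r*c/N - c - G + p*q*(N-1)*y*b
  y*((1-y)*(PD-PP) - x*(PC-PP))

/-- The reduced planar replicator vector field. -/
noncomputable def Fsys (N r c G B b h p q : ℝ) : ℝ × ℝ → ℝ × ℝ :=
  fun u => (fRHS N r c G B b h p q u.1 u.2, gRHS N r c G B b h p q u.1 u.2)

/-- Lyapunov stability of an equilibrium of a planar vector field. -/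
def IsStableEq (F : ℝ × ℝ → ℝ × ℝ) (s : ℝ × ℝ) : Prop :=
  ∀ ε > 0, ∃ δ > 0, ∀ u : ℝ → ℝ × ℝ,
    (∀ t, HasDerivAt u (F (u t)) t) → ‖u 0 - s‖ < δ → ∀ t ≥ 0, ‖u t - s‖ < ε

/-- Asymptotic stability of an equilibrium of a planar vector field. -/
def IsAsympStableEq (F : ℝ × ℝ → ℝ × ℝ) (s : ℝ × ℝ) : Prop :=
  IsStableEq F s ∧ ∃ δ > 0, ∀ u : ℝ → ℝ × ℝ,
    (∀ t, HasDerivAt u (F (u t)) t) → ‖u 0 - s‖ < δ →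
      Filter.Tendsto u Filter.atTop (nhds s)

/-- (1,1)-entry of the Jacobian of the reduced system. -/
noncomputable def Jxx (N r c G B b h p q x0 y0 : ℝ) : ℝ :=
  deriv (fun s => fRHS N r c G B b h p q s y0) x0

/-- (1,2)-entry of the Jacobian of the reduced system. -/
noncomputable def Jxy (N r c G B b h p q x0 y0 : ℝ) : ℝ :=
  deriv (fun s => fRHS N r c G B b h p q x0 s) y0

/-- (2,1)-entry of the Jacobian of the reduced system. -/
noncomputable def Jyx (N r c G B b h p q x0 y0 : ℝ) : ℝ :=
  deriv (fun s => gRHS N r c G B b h p q s y0) x0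

/-- (2,2)-entry of the Jacobian of the reduced system. -/
noncomputable def Jyy (N r c G B b h p q x0 y0 : ℝ) : ℝ :=
  deriv (fun s => gRHS N r c G B b h p q x0 s) y0

/-!
Near the all-defector vertex use the coordinates `x` and `z = 1 - x - y`: the replicator equations
factor as `ẋ = x φ` and `ż = z ψ`, where `φ` and `ψ` take the values `rc/N - c` and
`rc/N - c - G + pq(N-1)b` at the vertex. Both are negative, so `x² + z²` decays exponentially
near the vertex and is a strict Lyapunov function. The edges `y = 0` and `x + y = 1` are invariant,
and along them the flow is logistic with rates `G` and `c - rc/N`; a sigmoid solution therefore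
starts arbitrarily close to the punisher (resp. cooperator) vertex and still travels halfway
along the edge.
-/

open Real Filter Topology

section Lyapunov

variable {V V' : ℝ → ℝ} {k R : ℝ}

theorem lt_of_hasDerivAt_le_neg_mul (hV : ∀ t, HasDerivAt V (V' t) t) (hk : 0 < k)
    (hV0 : 0 ≤ V 0) (hR : V 0 < R) (hdecr : ∀ t, V t < R → V' t ≤ -k * V t)
    {t : ℝ} (ht : 0 ≤ t) : V t < R := by
  have hfence : V t ≤ (V 0 + R) / 2 :=
    image_le_of_deriv_right_lt_deriv_boundary (fun τ _ => (hV τ).continuousAt.continuousWithinAt)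
      (fun τ _ => (hV τ).hasDerivWithinAt) (by linarith) (fun _ => hasDerivAt_const _ _)
      (fun τ _ hτ => by nlinarith [hdecr τ (by linarith)]) ⟨ht, le_rfl⟩
  linarith

theorem le_mul_exp_of_hasDerivAt_le_neg_mul (hV : ∀ t, HasDerivAt V (V' t) t) (hk : 0 < k)
    (hV0 : 0 ≤ V 0) (hR : V 0 < R) (hdecr : ∀ t, V t < R → V' t ≤ -k * V t)
    {t : ℝ} (ht : 0 ≤ t) : V t ≤ V 0 * exp (-k * t) := by
  have := le_gronwallBound_of_liminf_deriv_right_le (K := -k) (ε := 0)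
    (fun τ _ => (hV τ).continuousAt.continuousWithinAt)
    (fun τ _ _ hr => (hV τ).hasDerivWithinAt.liminf_right_slope_le hr) le_rfl
    (fun τ hτ => by
      simpa using hdecr τ (lt_of_hasDerivAt_le_neg_mul hV hk hV0 hR hdecr hτ.1)) t ⟨ht, le_rfl⟩
  rwa [gronwallBound_ε0, sub_zero] at this

theorem isAsympStableEq_of_lyapunov {F : ℝ × ℝ → ℝ × ℝ} {s : ℝ × ℝ} {W : ℝ × ℝ → ℝ}
    {W' : ℝ × ℝ → ℝ × ℝ →L[ℝ] ℝ} {a : ℝ} (ha : 0 < a) (hk : 0 < k)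
    (hW : ∀ v, HasFDerivAt W (W' v) v) (hWs : W s = 0)
    (hlow : ∀ v, a * ‖v - s‖ ^ 2 ≤ W v) (hdecr : ∀ᶠ v in 𝓝 s, W' v (F v) ≤ -k * W v) :
    IsAsympStableEq F s := by
  obtain ⟨ρ, hρ, hρdecr⟩ := Metric.eventually_nhds_iff.1 hdecr
  have hW0 (v : ℝ × ℝ) : 0 ≤ W v := le_trans (by positivity) (hlow v)
  have hball {v : ℝ × ℝ} {ε : ℝ} (hε : 0 < ε) (hv : W v < a * ε ^ 2) : ‖v - s‖ < ε :=
    (pow_lt_pow_iff_left₀ (norm_nonneg _) hε.le two_ne_zero).1 <|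
      lt_of_mul_lt_mul_left ((hlow v).trans_lt hv) ha.le
  have hnear {ε : ℝ} (hε : 0 < ε) : ∃ δ > 0, ∀ v, ‖v - s‖ < δ → W v < a * ε ^ 2 := by
    have hlt : W s < a * ε ^ 2 := by rw [hWs]; positivity
    simpa [dist_eq_norm] using Metric.eventually_nhds_iff.1
      ((hW s).continuousAt.tendsto.eventually_lt_const hlt)
  have hdecay {u : ℝ → ℝ × ℝ} (hu : ∀ t, HasDerivAt u (F (u t)) t) (hu0 : W (u 0) < a * ρ ^ 2)
      {t : ℝ} (ht : 0 ≤ t) : W (u t) ≤ W (u 0) * exp (-k * t) :=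
    le_mul_exp_of_hasDerivAt_le_neg_mul (V := W ∘ u)
      (fun t => (hW (u t)).comp_hasDerivAt t (hu t)) hk (hW0 _) hu0
      (fun t ht => hρdecr (by rw [dist_eq_norm]; exact hball hρ ht)) ht
  refine ⟨fun ε hε => ?_, ?_⟩
  · obtain ⟨δ, hδ, hδW⟩ := hnear (lt_min hε hρ)
    refine ⟨δ, hδ, fun u hu hu0 t ht => ?_⟩
    have hu0' := hδW _ hu0
    have hmin : a * min ε ρ ^ 2 ≤ a * ρ ^ 2 := by gcongr; exact min_le_right _ _
    have hut : W (u t) < a * min ε ρ ^ 2 := calc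
      W (u t) ≤ W (u 0) * exp (-k * t) := hdecay hu (hu0'.trans_le hmin) ht
      _ ≤ W (u 0) := mul_le_of_le_one_right (hW0 _) (exp_le_one_iff.2 (by nlinarith))
      _ < a * min ε ρ ^ 2 := hu0'
    exact (hball (lt_min hε hρ) hut).trans_le (min_le_left _ _)
  · obtain ⟨δ, hδ, hδW⟩ := hnear hρ
    refine ⟨δ, hδ, fun u hu hu0 => ?_⟩
    have hexp : Tendsto (fun t => W (u 0) * exp (-k * t) / a) atTop (𝓝 0) := by
      simpa using ((tendsto_exp_atBot.comp
        (tendsto_id.const_mul_atTop_of_neg (neg_lt_zero.2 hk))).const_mul (W (u 0))).div_const a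
    have hsq : Tendsto (fun t => ‖u t - s‖ ^ 2) atTop (𝓝 0) :=
      squeeze_zero' (Eventually.of_forall fun _ => by positivity)
        ((eventually_ge_atTop 0).mono fun t ht => by
          rw [le_div_iff₀ ha, mul_comm]; exact (hlow _).trans (hdecay hu (hδW _ hu0) ht)) hexp
    simpa [tendsto_iff_norm_sub_tendsto_zero, Real.sqrt_sq (norm_nonneg _)] using hsq.sqrt

end Lyapunov

theorem not_isStableEq_of_logistic_ray {F : ℝ × ℝ → ℝ × ℝ} {s d : ℝ × ℝ} {k : ℝ}
    (hd : d ≠ 0) (hk : 0 < k)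
    (hF : ∀ ξ : ℝ, F (s + ξ • d) = (k * (ξ * (1 - ξ))) • d) : ¬ IsStableEq F s := by
  intro hs
  obtain ⟨δ, hδ, hδs⟩ := hs (‖d‖ / 2) (by positivity)
  have hstart : Tendsto (fun T => sigmoid (-T) * ‖d‖) atTop (𝓝 0) := by
    simpa using (tendsto_sigmoid_atBot.comp tendsto_neg_atTop_atBot).mul_const ‖d‖
  obtain ⟨T, hT, hTδ⟩ :=
    ((eventually_ge_atTop 0).and (hstart.eventually_lt_const hδ)).exists
  set u : ℝ → ℝ × ℝ := fun t => s + sigmoid (k * t - T) • d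
  have hu (t : ℝ) : HasDerivAt u (F (u t)) t := by
    have := (((hasDerivAt_sigmoid _).comp t
      (((hasDerivAt_id t).const_mul k).sub_const T)).smul_const d).const_add s
    rw [show F (u t) = _ from hF _]
    exact this.congr_deriv (by simp only [id, mul_one]; congr 1; ring)
  have hu0 : ‖u 0 - s‖ < δ := by
    simpa [u, norm_smul, abs_of_pos (sigmoid_pos _)] using hTδ
  have := hδs u hu hu0 (T / k) (by positivity)
  simp [u, mul_div_cancel₀ T hk.ne', norm_smul] at this
  linarith

theorem deriv_eq_of_eq_sub_mul {f φ : ℝ → ℝ} {a : ℝ} (hf : ∀ x, f x = (x - a) * φ x)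
    (hφ : DifferentiableAt ℝ φ a) : deriv f a = φ a := by
  rw [funext hf]
  exact ((((hasDerivAt_id a).sub_const a).mul hφ.hasDerivAt).congr_deriv (by simp)).deriv

section PublicGoodsGame

variable (N r c G B b h p q : ℝ)

/-- `PC - PP` and `PD - PP` in the notation of `fRHS`: the payoff advantages of cooperators and
of defectors over punishers. -/
def advantageC (y : ℝ) : ℝ := G - p*q*(N-1)*y*b

noncomputable def advantageD (x y : ℝ) : ℝ :=
  c - r*c/N + G - p*q*(N-1)*y*b - ((1-p*q)*B + p*q*h)*(N-1)*(1-x-y)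

theorem fRHS_eq (x y : ℝ) : fRHS N r c G B b h p q x y =
    x * ((1 - x) * advantageC N G b p q y - y * advantageD N r c G B b h p q x y) := by
  simp only [fRHS, advantageC, advantageD]; ring

theorem gRHS_eq (x y : ℝ) : gRHS N r c G B b h p q x y =
    y * ((1 - y) * advantageD N r c G B b h p q x y - x * advantageC N G b p q y) := by
  simp only [gRHS, advantageC, advantageD]; ring

theorem fRHS_add_gRHS (x y : ℝ) : fRHS N r c G B b h p q x y + gRHS N r c G B b h p q x y =
    (1 - x - y) * (x * advantageC N G b p q y + y * advantageD N r c G B b h p q x y) := by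
  simp only [fRHS, gRHS, advantageC, advantageD]; ring

theorem Jxx_defector : Jxx N r c G B b h p q 0 1 = r*c/N - c := by
  rw [Jxx, deriv_eq_of_eq_sub_mul (φ := fun x => (1 - x) * advantageC N G b p q 1
      - advantageD N r c G B b h p q x 1) (fun x => by rw [fRHS_eq]; ring)
      (by unfold advantageD; fun_prop)]
  simp only [advantageC, advantageD]; ring

theorem Jyy_defector : Jyy N r c G B b h p q 0 1 = r*c/N - c - G + p*q*(N-1)*b := by
  rw [Jyy, deriv_eq_of_eq_sub_mul (φ := fun y => -(y * advantageD N r c G B b h p q 0 y))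
      (fun y => by rw [gRHS_eq]; ring) (by unfold advantageD; fun_prop)]
  simp only [advantageD]; ring

theorem Jxx_punisher : Jxx N r c G B b h p q 0 0 = G := by
  rw [Jxx, deriv_eq_of_eq_sub_mul (φ := fun x => (1 - x) * advantageC N G b p q 0)
      (fun x => by rw [fRHS_eq]; ring) (by fun_prop)]
  simp only [advantageC]; ring

theorem Jyy_cooperator : Jyy N r c G B b h p q 1 0 = c - r*c/N := by
  rw [Jyy, deriv_eq_of_eq_sub_mul (φ := fun y => (1 - y) * advantageD N r c G B b h p q 1 y
      - advantageC N G b p q y) (fun y => by rw [gRHS_eq]; ring)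
      (by unfold advantageC advantageD; fun_prop)]
  simp only [advantageC, advantageD]; ring

theorem not_isStableEq_punisher (hG : 0 < G) : ¬ IsStableEq (Fsys N r c G B b h p q) (0, 0) :=
  not_isStableEq_of_logistic_ray (d := (1, 0)) (by simp) hG fun ξ => by
    ext
    · simp [Fsys, fRHS_eq, advantageC]; ring
    · simp [Fsys, gRHS_eq]

theorem not_isStableEq_cooperator (hc : 0 < c - r*c/N) :
    ¬ IsStableEq (Fsys N r c G B b h p q) (1, 0) :=
  not_isStableEq_of_logistic_ray (d := (-1, 1)) (by simp) hc fun ξ => by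
    ext <;> simp [Fsys, fRHS_eq, gRHS_eq, advantageC, advantageD] <;> ring

theorem isAsympStableEq_defector (hC : r*c/N - c < 0) (hD : r*c/N - c - G + p*q*(N-1)*b < 0) :
    IsAsympStableEq (Fsys N r c G B b h p q) (0, 1) := by
  set m := min (-(r*c/N - c)) (-(r*c/N - c - G + p*q*(N-1)*b))
  have hm : 0 < m := lt_min (by linarith) (by linarith)
  set φ : ℝ × ℝ → ℝ := fun v =>
    (1 - v.1) * advantageC N G b p q v.2 - v.2 * advantageD N r c G B b h p q v.1 v.2
  set ψ : ℝ × ℝ → ℝ := fun v =>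
    -(v.1 * advantageC N G b p q v.2 + v.2 * advantageD N r c G B b h p q v.1 v.2)
  have hφ : ∀ᶠ v in 𝓝 (0, 1), φ v < -m / 2 := by
    refine (Continuous.tendsto (by unfold φ advantageC advantageD; fun_prop) _).eventually_lt_const
      ?_
    have : m ≤ -(r*c/N - c) := min_le_left _ _
    simp only [φ, advantageC, advantageD]; linarith
  have hψ : ∀ᶠ v in 𝓝 (0, 1), ψ v < -m / 2 := by
    refine (Continuous.tendsto (by unfold ψ advantageC advantageD; fun_prop) _).eventually_lt_const
      ?_
    have : m ≤ -(r*c/N - c - G + p*q*(N-1)*b) := min_le_right _ _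
    simp only [ψ, advantageC, advantageD]; linarith
  have hx (v : ℝ × ℝ) := (hasFDerivAt_fst (𝕜 := ℝ) (p := v)).pow 2
  have hz (v : ℝ × ℝ) :=
    (((hasFDerivAt_const (1 : ℝ) v).sub (hasFDerivAt_fst (𝕜 := ℝ))).sub hasFDerivAt_snd).pow 2
  refine isAsympStableEq_of_lyapunov (a := 1 / 2) (k := m) (by norm_num) hm
    (fun v => (hx v).add (hz v)) (by norm_num) (fun v => ?_) ?_
  · show 1 / 2 * ‖v - (0, 1)‖ ^ 2 ≤ v.1 ^ 2 + (1 - v.1 - v.2) ^ 2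
    have hnorm : ‖v - (0, 1)‖ ≤ √(2 * (v.1 ^ 2 + (1 - v.1 - v.2) ^ 2)) :=
      norm_prod_le_iff.2 ⟨Real.abs_le_sqrt (by simp; nlinarith),
        Real.abs_le_sqrt (by simp; nlinarith [sq_nonneg (1 - 2 * v.1 - v.2)])⟩
    have := (Real.le_sqrt (norm_nonneg _) (by positivity)).1 hnorm
    linarith
  · filter_upwards [hφ, hψ] with v hφv hψv
    simp only [Nat.add_one_sub_one, pow_one, nsmul_eq_mul, Nat.cast_ofNat, Pi.sub_apply, zero_sub,
      add_apply, smul_apply, ContinuousLinearMap.coe_fst', smul_eq_mul, sub_apply, neg_apply,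
      ContinuousLinearMap.coe_snd', Pi.add_apply, neg_mul]
    have hf : (Fsys N r c G B b h p q v).1 = v.1 * φ v := fRHS_eq ..
    have hfg : -(Fsys N r c G B b h p q v).1 - (Fsys N r c G B b h p q v).2 =
        (1 - v.1 - v.2) * ψ v := by
      simp only [Fsys, ψ]; linear_combination -fRHS_add_gRHS N r c G B b h p q v.1 v.2
    rw [hfg, hf]
    nlinarith [mul_le_mul_of_nonneg_left hφv.le (sq_nonneg v.1),
      mul_le_mul_of_nonneg_left hψv.le (sq_nonneg (1 - v.1 - v.2))]

end PublicGoodsGame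

theorem stmt19_general (N r c G B b h p q : ℝ)
    (hr : 1 < r) (hrN : r < N) (hc : 0 < c) (hG : 0 < G)
    (hD : r*c/N - c - G + p*q*(N-1)*b < 0) :
    Jxx N r c G B b h p q 0 1 = r*c/N - c ∧
    Jyy N r c G B b h p q 0 1 = r*c/N - c - G + p*q*(N-1)*b ∧
    Jxx N r c G B b h p q 0 1 < 0 ∧ Jyy N r c G B b h p q 0 1 < 0 ∧
    IsAsympStableEq (Fsys N r c G B b h p q) (0, 1) ∧
    Jxx N r c G B b h p q 0 0 = G ∧ 0 < G ∧
    ¬ IsStableEq (Fsys N r c G B b h p q) (0, 0) ∧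
    Jyy N r c G B b h p q 1 0 = c - r*c/N ∧ 0 < c - r*c/N ∧
    ¬ IsStableEq (Fsys N r c G B b h p q) (1, 0) := by
  have hC : r*c/N - c < 0 := by
    have hrc : r*c/N < c := (div_lt_iff₀ (by linarith)).2 (by nlinarith)
    linarith
  refine ⟨Jxx_defector .., Jyy_defector .., ?_, ?_,
    isAsympStableEq_defector N r c G B b h p q hC hD, Jxx_punisher .., hG,
    not_isStableEq_punisher N r c G B b h p q hG, Jyy_cooperator .., by linarith,
    not_isStableEq_cooperator N r c G B b h p q (by linarith)⟩
  · rw [Jxx_defector]; exact hC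
  · rw [Jyy_defector]; exact hD

/-- if the interior fixed point does not exist (β ≥ 1 or μ ≥ 1 or
β + μ ≥ 1), the DP-edge fixed point does not exist (α ∉ (0,1)),
rc/N - c - G + pq(N-1)b < 0 and r < N, then both eigenvalues rc/N - c and
rc/N - c - G + pq(N-1)b of the Jacobian at the all-defector vertex (0,1) are negative, so
the all-defector state is asymptotically stable, while the eigenvalue G at the
all-punisher vertex (0,0) and the eigenvalue c - rc/N at the all-cooperator vertex (1,0)
are strictly positive, so those vertices are unstable. -/
theorem stmt19 (N r c G B b h p q α β μ : ℝ)
    (hr : 1 < r) (hrN : r < N) (hc : 0 < c) (hG : 0 < G) (hB : 0 < B) (hb : 0 < b)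
    (hh : 0 ≤ h) (hp0 : 0 < p) (hp1 : p ≤ 1) (hq0 : 0 < q) (hq1 : q ≤ 1)
    (hβ : β = (c - r*c/N) / ((1-p*q)*B*(N-1) + p*q*h*(N-1)))
    (hμ : μ = G / (p*q*(N-1)*b))
    (hα : α = (r*c/N - c - G + p*q*(N-1)*b) / ((B + b - h)*(N-1)*p*q - B*(N-1)))
    (hnoint : 1 ≤ β ∨ 1 ≤ μ ∨ 1 ≤ β + μ)
    (hnoedge : α ∉ Set.Ioo (0:ℝ) 1)
    (hD : r*c/N - c - G + p*q*(N-1)*b < 0) :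
    Jxx N r c G B b h p q 0 1 = r*c/N - c ∧
    Jyy N r c G B b h p q 0 1 = r*c/N - c - G + p*q*(N-1)*b ∧
    Jxx N r c G B b h p q 0 1 < 0 ∧ Jyy N r c G B b h p q 0 1 < 0 ∧
    IsAsympStableEq (Fsys N r c G B b h p q) (0, 1) ∧
    Jxx N r c G B b h p q 0 0 = G ∧ 0 < G ∧
    ¬ IsStableEq (Fsys N r c G B b h p q) (0, 0) ∧
    Jyy N r c G B b h p q 1 0 = c - r*c/N ∧ 0 < c - r*c/N ∧
    ¬ IsStableEq (Fsys N r c G B b h p q) (1, 0) :=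
  stmt19_general N r c G B b h p q hr hrN hc hG hD
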